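/- Let X be a nonempty set, p a partial metric on X, and {x_n}, {y_n} two sequences in X such that p(x_n, y_n) → 0 as n → ∞. If {y_n} is rough statistically convergent to y with roughness degree r ≥ 0 and the self-distances satisfy p(y_n, y_n) → 0 as n → ∞, then {x_n} is rough statistically convergent to y with the same roughness degree r. -/

import Mathlib

/-- A partial metric on a set `X`. -/
structure IsPartialMetric {X : Type*} (p : X → X → ℝ) : Prop where
  nonneg : ∀ x y : X, 0 ≤ p x y
  self_le : ∀ x y : X, p x x ≤ p x y
  eq_iff : ∀ x y : X, x = y ↔ p x x = p x y ∧ p x y = p y y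
  symm : ∀ x y : X, p x y = p y x
  triangle : ∀ x y z : X, p x y ≤ p x z + p z y - p z z

open Classical in
/-- `A ⊆ ℕ` has natural density `d`. -/
def HasNatDensity (A : Set ℕ) (d : ℝ) : Prop :=
  Filter.Tendsto
    (fun n : ℕ => (((Finset.range n).filter (fun k => k ∈ A)).card : ℝ) / (n : ℝ))
    Filter.atTop (nhds d)

/-- `l` is a rough statistical limit point of the sequence `x` with roughness degree `r`,
i.e. `l ∈ st-LIM^r x_n`. -/
def RStatLimit {X : Type*} (p : X → X → ℝ) (x : ℕ → X) (r : ℝ) (l : X) : Prop :=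
  ∀ ε : ℝ, 0 < ε → HasNatDensity {n : ℕ | r + ε ≤ |p (x n) l - p l l|} 0

/-!
Since `|p(x, l) - p(y, l)| ≤ p(x, y)` in any partial metric, once `p(x_n, y_n) < ε / 2` every
index with `|p(x_n, l) - p(l, l)| ≥ r + ε` also has `|p(y_n, l) - p(l, l)| ≥ r + ε / 2`. So the
exceptional set of `x` at level `ε` lies, up to finitely many indices, inside the exceptional set
of `y` at level `ε / 2`, which has density zero.
-/

open Filter Finset

lemma IsPartialMetric.abs_sub_le {X : Type*} {p : X → X → ℝ} (hp : IsPartialMetric p)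
    (x y z : X) : |p x z - p y z| ≤ p x y := by
  have hxz := hp.triangle x z y
  have hyz := hp.triangle y z x
  rw [hp.symm y x] at hyz
  have := hp.nonneg x x
  have := hp.nonneg y y
  exact abs_sub_le_iff.2 ⟨by linarith, by linarith⟩

open Classical in
lemma HasNatDensity.zero_of_eventually_subset {A S : Set ℕ} (hS : HasNatDensity S 0)
    (hAS : ∀ᶠ n in atTop, n ∈ A → n ∈ S) : HasNatDensity A 0 := by
  obtain ⟨N, hN⟩ := eventually_atTop.1 hAS
  have hcard (n : ℕ) :
      ((range n).filter (· ∈ A)).card ≤ ((range n).filter (· ∈ S)).card + N := by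
    have hsub : (range n).filter (· ∈ A) ⊆ (range n).filter (· ∈ S) ∪ range N := by
      intro k hk
      simp only [mem_filter, mem_range, mem_union] at hk ⊢
      by_cases hkN : k < N
      · exact Or.inr hkN
      · exact Or.inl ⟨hk.1, hN k (not_lt.1 hkN) hk.2⟩
    calc _ ≤ ((range n).filter (· ∈ S) ∪ range N).card := card_le_card hsub
      _ ≤ _ := (card_union_le _ _).trans_eq (by rw [card_range])
  refine squeeze_zero (fun n => by positivity) (fun n => ?_)
    (by simpa using hS.add (tendsto_const_div_atTop_nhds_zero_nat (N : ℝ)))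
  rw [← add_div]
  gcongr
  exact_mod_cast hcard n

theorem rStatLimit_transfer'_general
    {X : Type*} (p : X → X → ℝ) (hp : IsPartialMetric p)
    (x y : ℕ → X)
    (hxy : Filter.Tendsto (fun n : ℕ => p (x n) (y n)) Filter.atTop (nhds 0))
    (l : X) (r : ℝ) (hy : RStatLimit p y r l) :
    RStatLimit p x r l := by
  intro ε hε
  refine (hy (ε / 2) (half_pos hε)).zero_of_eventually_subset ?_
  filter_upwards [hxy.eventually (gt_mem_nhds (half_pos hε))] with n hclose hfar
  have hfar : r + ε ≤ |p (x n) l - p l l| := hfar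
  show r + ε / 2 ≤ |p (y n) l - p l l|
  have htri := abs_sub_le (p (x n) l) (p (y n) l) (p l l)
  linarith [hp.abs_sub_le (x n) (y n) l]

/-- If `p (x_n, y_n) → 0`, `y_n` is `r`-statistically convergent to `y`, and the
self-distances `p (y_n, y_n) → 0`, then `x_n` is `r`-statistically convergent to `y`. -/
theorem rStatLimit_transfer'
    {X : Type*} [Nonempty X] (p : X → X → ℝ) (hp : IsPartialMetric p)
    (x y : ℕ → X)
    (hxy : Filter.Tendsto (fun n : ℕ => p (x n) (y n)) Filter.atTop (nhds 0))
    (l : X) (r : ℝ) (hr : 0 ≤ r) (hy : RStatLimit p y r l)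
    (hselfy : Filter.Tendsto (fun n : ℕ => p (y n) (y n)) Filter.atTop (nhds 0)) :
    RStatLimit p x r l :=
  rStatLimit_transfer'_general p hp x y hxy l r hy
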